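/- arXiv:0909.3520 — 2 statements merged into one kernel-verified Lean document; each statement's English description precedes it below -/
import Mathlib

section
/- Assume the generating set S of a k-peg Hanoi group G satisfies condition (*). Suppose g ∈ G has a representation with nonempty essential set in which exactly M distinct elements of S ∪ S^{−1} occur. Then for every j ∈ X_k, either g|_j = g, or g|_j lies in the prenucleus with d(g|_j) < M. -/
/-!
Common framework: automorphisms of the rooted tree `X_k^*`, root permutations,
sections, self-similar and contracting groups, Hanoi automorphisms and Hanoi
groups, following Makisumi–Stadnyk–Steinhurst, "Modified Hanoi Towers Groups
and Limit Spaces".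

A word `x_n … x_1` over the alphabet `X_k = Fin k` is encoded as the list
`[x_n, …, x_1]`, whose head `x_n` is the first letter, i.e. the letter that a
tree automorphism reads (and permutes) first.
-/

namespace Hanoi

/-- Words over the alphabet `X_k = Fin k`. -/
abbrev Word (k : ℕ) := List (Fin k)

/-- `e` is an automorphism of the rooted tree `X_k^*`: it fixes the root
(the empty word), preserves word length (levels) and preserves the tree
structure (words sharing an initial segment of length `n` are sent to words
sharing an initial segment of length `n`). -/
def IsTreeAut {k : ℕ} (e : Equiv.Perm (Word k)) : Prop :=
  (∀ w : Word k, (e w).length = w.length) ∧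
    ∀ (w v : Word k) (n : ℕ), w.take n = v.take n → (e w).take n = (e v).take n

open Classical in
/-- The root permutation `σ_e` of a tree automorphism `e` (its action on
one-letter words). -/
noncomputable def rootPerm {k : ℕ} (e : Equiv.Perm (Word k)) : Equiv.Perm (Fin k) :=
  if h : Function.Bijective (fun x : Fin k => ((e [x]).head?.getD x)) then
    Equiv.ofBijective _ h
  else 1

open Classical in
/-- The section `e|_x` of `e` at a letter `x`: the unique automorphism with
`e (x :: w) = σ_e x :: (e|_x) w` for all words `w`. -/
noncomputable def sec {k : ℕ} (e : Equiv.Perm (Word k)) (x : Fin k) : Equiv.Perm (Word k) :=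
  if h : Function.Bijective (fun w : Word k => (e (x :: w)).tail) then
    Equiv.ofBijective _ h
  else 1

/-- The section `e|_v` of `e` at a word `v = x_n … x_1`, defined by
`e|_v = (e|_{x_n})|_{x_{n-1} … x_1}`. -/
noncomputable def secW {k : ℕ} (e : Equiv.Perm (Word k)) : Word k → Equiv.Perm (Word k)
  | [] => e
  | x :: v => secW (sec e x) v

/-- A subgroup of the permutations of `X_k^*` is self-similar if it consists of
tree automorphisms and is closed under taking sections. -/
def IsSelfSimilar {k : ℕ} (G : Subgroup (Equiv.Perm (Word k))) : Prop :=
  (∀ g ∈ G, IsTreeAut g) ∧ ∀ g ∈ G, ∀ x : Fin k, sec g x ∈ G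

/-- A self-similar group `G` is contracting if there is a finite subset `N ⊆ G`
such that for every `g ∈ G` all sections of `g` at words of length at least
some `m` lie in `N`. -/
def IsContracting {k : ℕ} (G : Subgroup (Equiv.Perm (Word k))) : Prop :=
  ∃ N : Set (Equiv.Perm (Word k)), N.Finite ∧ N ⊆ (G : Set (Equiv.Perm (Word k))) ∧
    ∀ g ∈ G, ∃ m : ℕ, ∀ v : Word k, m ≤ v.length → secW g v ∈ N

/-- `N` is the nucleus of `G`: a smallest finite subset of `G` catching all
deep enough sections of every element of `G`. -/
def IsNucleus {k : ℕ} (G : Subgroup (Equiv.Perm (Word k)))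
    (N : Set (Equiv.Perm (Word k))) : Prop :=
  (N.Finite ∧ N ⊆ (G : Set (Equiv.Perm (Word k))) ∧
    ∀ g ∈ G, ∃ m : ℕ, ∀ v : Word k, m ≤ v.length → secW g v ∈ N) ∧
  ∀ N' : Set (Equiv.Perm (Word k)), N'.Finite → N' ⊆ (G : Set (Equiv.Perm (Word k))) →
    (∀ g ∈ G, ∃ m : ℕ, ∀ v : Word k, m ≤ v.length → secW g v ∈ N') → N ⊆ N'

/-- `a` is a Hanoi automorphism with set of inactive pegs `Q`: the section at
each active peg (element of the complement of `Q`) is trivial, the section at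
each inactive peg is `a` itself, and the root permutation fixes each inactive
peg. -/
def IsHanoiWith {k : ℕ} (a : Equiv.Perm (Word k)) (Q : Set (Fin k)) : Prop :=
  IsTreeAut a ∧ (∀ i ∉ Q, sec a i = 1) ∧ (∀ j ∈ Q, sec a j = a) ∧
    ∀ j ∈ Q, rootPerm a j = j

/-- `a` is a `k`-peg Hanoi automorphism. -/
def IsHanoiAut {k : ℕ} (a : Equiv.Perm (Word k)) : Prop := ∃ Q, IsHanoiWith a Q

open Classical in
/-- The set `Q_a` of inactive pegs of a Hanoi automorphism `a`; by convention
`Q_1 = X_k` (for `a ≠ 1` the set of inactive pegs is uniquely determined). -/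
noncomputable def inactivePegs {k : ℕ} (a : Equiv.Perm (Word k)) : Set (Fin k) :=
  if a = 1 then Set.univ
  else if h : ∃ Q, IsHanoiWith a Q then h.choose else ∅

/-- `S_{k,q}`: the set of Hanoi automorphisms over `X_k` with exactly `q`
inactive pegs. -/
noncomputable def hanoiSet (k q : ℕ) : Set (Equiv.Perm (Word k)) :=
  {a | IsHanoiAut a ∧ (inactivePegs a).ncard = q}

/-- `L = [s_n, …, s_1]` is a representation of `g` over the generating set `S`:
each `s_i ∈ S ∪ S⁻¹` and `g = s_n ⋯ s_2 s_1`. -/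
def IsRepOf {k : ℕ} (S : Set (Equiv.Perm (Word k))) (L : List (Equiv.Perm (Word k)))
    (g : Equiv.Perm (Word k)) : Prop :=
  (∀ s ∈ L, s ∈ S ∨ s⁻¹ ∈ S) ∧ L.prod = g

/-- The length `l(g)` of `g` with respect to `S`: the length of a minimal
representation (`0` for the identity). -/
noncomputable def repLength {k : ℕ} (S : Set (Equiv.Perm (Word k)))
    (g : Equiv.Perm (Word k)) : ℕ :=
  sInf {n | ∃ L, IsRepOf S L g ∧ L.length = n}

/-- The essential set of a representation: the intersection of the sets of
inactive pegs of its letters. -/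
noncomputable def essSet {k : ℕ} (L : List (Equiv.Perm (Word k))) : Set (Fin k) :=
  ⋂ s ∈ L, inactivePegs s

/-- The prenucleus of `G`: the set of elements `g ∈ G` with `g|_j = g` for some
letter `j`. -/
noncomputable def preNucleus {k : ℕ} (G : Subgroup (Equiv.Perm (Word k))) :
    Set (Equiv.Perm (Word k)) :=
  {g | g ∈ G ∧ ∃ j : Fin k, sec g j = g}

/-- The underlying function of the Hanoi Towers move `a_{ij}`: it changes the
first occurrence of `i` or `j` in a word by means of the transposition `(i j)`
and leaves the rest of the word unchanged. -/
def hanoiMoveFun {k : ℕ} (i j : Fin k) : Word k → Word k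
  | [] => []
  | x :: w => if x = i ∨ x = j then Equiv.swap i j x :: w else x :: hanoiMoveFun i j w

theorem hanoiMoveFun_involutive {k : ℕ} (i j : Fin k) :
    Function.Involutive (hanoiMoveFun i j) := by
  intro w
  induction w with
  | nil => rfl
  | cons x t ih =>
    by_cases h : x = i ∨ x = j
    · have h2 : Equiv.swap i j x = i ∨ Equiv.swap i j x = j := by
        rcases h with h | h <;> subst h <;> simp
      simp only [hanoiMoveFun, if_pos h, if_pos h2, Equiv.swap_apply_self]
    · simp only [hanoiMoveFun, if_neg h, ih]

/-- The Hanoi Towers move `a_{ij}`, as a permutation of `X_k^*`: its root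
permutation is the transposition `(i j)`, its sections at `i` and `j` are
trivial and all its other sections equal `a_{ij}` itself. -/
def hanoiMove {k : ℕ} (i j : Fin k) : Equiv.Perm (Word k) :=
  (hanoiMoveFun_involutive i j).toPerm

/-- The orbit of the letter `j` under the subgroup of `Sym(X_k)` generated by
the root permutations of the elements of `T`. -/
noncomputable def orbT {k : ℕ} (T : Finset (Equiv.Perm (Word k))) (j : Fin k) : Set (Fin k) :=
  MulAction.orbit (Subgroup.closure ((fun a => rootPerm a) '' (T : Set (Equiv.Perm (Word k))))) j

/-- The set `Fix(T)` of letters fixed by the root permutation of every element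
of `T`. -/
noncomputable def fixT {k : ℕ} (T : Finset (Equiv.Perm (Word k))) : Set (Fin k) :=
  {x | ∀ s ∈ T, rootPerm s x = x}

/-- Condition (*) on a generating set `S` of Hanoi automorphisms: for every
finite `T ⊆ S` with nonempty essential set and every letter `j ∉ Fix(T)`,
the orbit of `j` misses the inactive pegs of some element of `T`. -/
noncomputable def CondStar {k : ℕ} (S : Set (Equiv.Perm (Word k))) : Prop :=
  ∀ T : Finset (Equiv.Perm (Word k)), (T : Set (Equiv.Perm (Word k))) ⊆ S →
    (⋂ s ∈ T, inactivePegs s).Nonempty →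
    ∀ j : Fin k, j ∉ fixT T →
      ∃ s ∈ T, orbT T j ∩ inactivePegs s = ∅

open Classical in
/-- `d(g)`: the least number of distinct generators occurring among all
representations of `g` having nonempty essential set. -/
noncomputable def dCount {k : ℕ} (S : Set (Equiv.Perm (Word k)))
    (g : Equiv.Perm (Word k)) : ℕ :=
  sInf {M | ∃ L, IsRepOf S L g ∧ (essSet L).Nonempty ∧ L.toFinset.card = M}

/-- `S` is fully symmetric: for every non-identity `a ∈ S` and every
`φ ∈ Sym(X_k)`, the Hanoi automorphism `φ·a` with inactive pegs `φ(Q_a)` and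
root permutation `φ ∘ σ_a ∘ φ⁻¹` again lies in `S`. -/
noncomputable def FullySymmetric {k : ℕ} (S : Set (Equiv.Perm (Word k))) : Prop :=
  ∀ a ∈ S, a ≠ 1 → ∀ φ : Equiv.Perm (Fin k), ∀ b : Equiv.Perm (Word k),
    IsHanoiWith b (φ '' inactivePegs a) →
    rootPerm b = φ * rootPerm a * φ⁻¹ → b ∈ S

/-- The family `R̲_{k,n}`: the identity together with all Hanoi automorphisms
`a` such that (1) `Q_a ⊆ {m+1, …, m+n}` for some `m`, and (2) whenever
`i ∈ Q_a` the root permutation of `a` fixes `i-1, …, i-(n-1)`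
(all peg labels mod `k`). -/
noncomputable def Runder (k n : ℕ) : Set (Equiv.Perm (Word k)) :=
  {a | a = 1 ∨ (IsHanoiAut a ∧
    (∃ m : Fin k, ∀ q ∈ inactivePegs a, ∃ t : ℕ, 1 ≤ t ∧ t ≤ n ∧
      (q : ℕ) = ((m : ℕ) + t) % k) ∧
    ∀ i ∈ inactivePegs a, ∀ x : Fin k, ∀ t : ℕ, 1 ≤ t → t ≤ n - 1 →
      ((x : ℕ) + t) % k = (i : ℕ) → rootPerm a x = x)}

/-- The family `R̄_{k,n}`: the identity together with all Hanoi automorphisms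
`a` such that (1) `Q_a ⊆ {m+1, …, m+n}` for some `m`, and (2) whenever
`i ∈ Q_a` the root permutation of `a` fixes `i+1, …, i+(n-1)`
(all peg labels mod `k`). -/
noncomputable def Rover (k n : ℕ) : Set (Equiv.Perm (Word k)) :=
  {a | a = 1 ∨ (IsHanoiAut a ∧
    (∃ m : Fin k, ∀ q ∈ inactivePegs a, ∃ t : ℕ, 1 ≤ t ∧ t ≤ n ∧
      (q : ℕ) = ((m : ℕ) + t) % k) ∧
    ∀ i ∈ inactivePegs a, ∀ x : Fin k, ∀ t : ℕ, 1 ≤ t → t ≤ n - 1 →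
      (x : ℕ) = ((i : ℕ) + t) % k → rootPerm a x = x)}

/-- The finite word `x_m … x_1` (first letter `x_m`) read off from a
left-infinite sequence `… x_2 x_1`, encoded as `x : ℕ → Fin k` with
`x s = x_{s+1}`. -/
def wordOf {k : ℕ} (x : ℕ → Fin k) (m : ℕ) : Word k := (List.range m).reverse.map x

/-!
Write `g = s_n ⋯ s_1` with all `s_i` Hanoi automorphisms sharing an inactive peg `p`. The
section `g|_j` is the product of the sections `s_i|_{j_i}`, where `j_i` runs through images of
`j` under root permutations, and each of these sections is `1` or `s_i` itself. If `j` is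
inactive for every letter, this gives `g|_j = g`. Otherwise condition (*) (or, when `j` is fixed
by all root permutations, the letter for which `j` is active) yields a letter whose inactive
pegs miss the whole orbit of `j`, so every occurrence of that letter contributes `1`. What is
left is a representation of `g|_j` by a sublist of the letters, with one distinct letter fewer,
whose essential set still contains `p`; and `p` then satisfies `g|_j|_p = g|_j`.
-/

section

variable {k : ℕ} {e f : Equiv.Perm (Word k)}

namespace IsTreeAut

lemma one : IsTreeAut (1 : Equiv.Perm (Word k)) :=
  ⟨fun _ => rfl, fun _ _ _ h => h⟩

lemma take_eq (he : IsTreeAut e) (w : Word k) (n : ℕ) : (e w).take n = e (w.take n) := by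
  rw [he.2 w (w.take n) n (by simp [List.take_take]),
    List.take_of_length_le (by rw [he.1]; exact List.length_take_le n w)]

lemma mul (he : IsTreeAut e) (hf : IsTreeAut f) : IsTreeAut (e * f) :=
  ⟨fun w => by simp [he.1, hf.1], fun _ _ _ h => he.2 _ _ _ (hf.2 _ _ _ h)⟩

lemma inv (he : IsTreeAut e) : IsTreeAut e⁻¹ := by
  refine ⟨fun w => ?_, fun w v n h => e.injective ?_⟩
  · simpa using (he.1 (e⁻¹ w)).symm
  · rw [← he.take_eq, ← he.take_eq]
    simpa using h

lemma exists_apply_singleton (he : IsTreeAut e) (x : Fin k) : ∃ y, e [x] = [y] :=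
  List.length_eq_one_iff.mp (he.1 [x])

lemma apply_singleton (he : IsTreeAut e) (x : Fin k) : e [x] = [rootPerm e x] := by
  have hbij : Function.Bijective (fun x : Fin k => (e [x]).head?.getD x) := by
    refine Finite.injective_iff_bijective.mp fun x y hxy => ?_
    obtain ⟨a, ha⟩ := he.exists_apply_singleton x
    obtain ⟨b, hb⟩ := he.exists_apply_singleton y
    simp only [ha, hb, List.head?_cons, Option.getD_some] at hxy
    have : e [x] = e [y] := by rw [ha, hb, hxy]
    simpa using e.injective this
  obtain ⟨a, ha⟩ := he.exists_apply_singleton x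
  rw [rootPerm, dif_pos hbij]
  simp [ha]

lemma head?_apply_cons (he : IsTreeAut e) (x : Fin k) (w : Word k) :
    (e (x :: w)).head? = some (rootPerm e x) := by
  have h := he.take_eq (x :: w) 1
  rw [List.take_one, List.take_succ_cons, List.take_zero, he.apply_singleton] at h
  cases hhead : (e (x :: w)).head? <;> simp_all

lemma cons_tail_apply_cons (he : IsTreeAut e) (x : Fin k) (w : Word k) :
    rootPerm e x :: (e (x :: w)).tail = e (x :: w) :=
  List.cons_head?_tail (he.head?_apply_cons x w)

lemma bijective_tail_apply_cons (he : IsTreeAut e) (x : Fin k) :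
    Function.Bijective (fun w : Word k => (e (x :: w)).tail) := by
  refine ⟨fun w v h => ?_, fun u => ?_⟩
  · have : e (x :: w) = e (x :: v) := by
      rw [← he.cons_tail_apply_cons x w, ← he.cons_tail_apply_cons x v]
      exact congrArg _ h
    exact (List.cons.inj (e.injective this)).2
  · set v := e⁻¹ (rootPerm e x :: u)
    have hev : e v = rootPerm e x :: u := e.apply_symm_apply _
    have htake : v.take 1 = [x] := e.injective <| by
      rw [← he.take_eq, hev, he.apply_singleton]; rfl
    have hvx : x :: v.tail = v := List.cons_head?_tail (by simpa [List.take_one] using htake)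
    exact ⟨v.tail, by simp only [hvx, hev, List.tail_cons]⟩

lemma apply_cons (he : IsTreeAut e) (x : Fin k) (w : Word k) :
    e (x :: w) = rootPerm e x :: sec e x w := by
  rw [sec, dif_pos (he.bijective_tail_apply_cons x)]
  exact (he.cons_tail_apply_cons x w).symm

end IsTreeAut

lemma rootPerm_one : rootPerm (1 : Equiv.Perm (Word k)) = 1 :=
  Equiv.ext fun x => by simpa using (IsTreeAut.one.apply_singleton x).symm

lemma sec_one (x : Fin k) : sec (1 : Equiv.Perm (Word k)) x = 1 :=
  Equiv.ext fun w => by simpa using (List.cons.inj (IsTreeAut.one.apply_cons x w)).2.symm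

lemma rootPerm_mul (he : IsTreeAut e) (hf : IsTreeAut f) :
    rootPerm (e * f) = rootPerm e * rootPerm f :=
  Equiv.ext fun x => by
    simpa [hf.apply_singleton, he.apply_singleton] using ((he.mul hf).apply_singleton x).symm

lemma sec_mul (he : IsTreeAut e) (hf : IsTreeAut f) (x : Fin k) :
    sec (e * f) x = sec e (rootPerm f x) * sec f x :=
  Equiv.ext fun w => by
    simpa [hf.apply_cons, he.apply_cons, rootPerm_mul he hf] using
      ((he.mul hf).apply_cons x w).symm

lemma rootPerm_inv (he : IsTreeAut e) : rootPerm e⁻¹ = (rootPerm e)⁻¹ :=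
  eq_inv_of_mul_eq_one_right <| by rw [← rootPerm_mul he he.inv, mul_inv_cancel, rootPerm_one]

lemma sec_inv (he : IsTreeAut e) (x : Fin k) : sec e⁻¹ x = (sec e (rootPerm e⁻¹ x))⁻¹ :=
  eq_inv_of_mul_eq_one_right <| by rw [← sec_mul he he.inv, mul_inv_cancel, sec_one]

variable {a : Equiv.Perm (Word k)} {Q Q' : Set (Fin k)}

lemma IsHanoiWith.inv (h : IsHanoiWith a Q) : IsHanoiWith a⁻¹ Q := by
  obtain ⟨ht, hout, hin, hfix⟩ := h
  have hfix' : ∀ j ∈ Q, rootPerm a⁻¹ j = j := fun j hj => by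
    rw [rootPerm_inv ht, Equiv.Perm.inv_eq_iff_eq, hfix j hj]
  refine ⟨ht.inv, fun i hi => ?_, fun j hj => ?_, hfix'⟩
  · -- `σ_a` fixes `Q` pointwise, so `σ_a⁻¹` maps the complement of `Q` into itself
    have hni : rootPerm a⁻¹ i ∉ Q := fun hmem => hi <| by
      have hfixed := hfix _ hmem
      rw [rootPerm_inv ht] at hfixed hmem
      simp only [Equiv.Perm.coe_inv, Equiv.apply_symm_apply] at hfixed
      exact hfixed ▸ hmem
    rw [sec_inv ht, hout _ hni, inv_one]
  · rw [sec_inv ht, hfix' j hj, hin j hj]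

lemma IsHanoiWith.unique (h : IsHanoiWith a Q) (h' : IsHanoiWith a Q') (hne : a ≠ 1) :
    Q = Q' := by
  ext i
  constructor <;> intro hi <;> by_contra hi'
  · exact hne ((h.2.2.1 i hi).symm.trans (h'.2.1 i hi'))
  · exact hne ((h'.2.2.1 i hi).symm.trans (h.2.1 i hi'))

lemma isHanoiWith_one : IsHanoiWith (1 : Equiv.Perm (Word k)) Set.univ :=
  ⟨.one, fun i hi => absurd (Set.mem_univ i) hi, fun j _ => sec_one j,
    fun j _ => by rw [rootPerm_one]; rfl⟩

lemma IsHanoiAut.isHanoiWith_inactivePegs (ha : IsHanoiAut a) :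
    IsHanoiWith a (inactivePegs a) := by
  by_cases h1 : a = 1
  · subst h1
    rw [inactivePegs, if_pos rfl]
    exact isHanoiWith_one
  · rw [inactivePegs, if_neg h1, dif_pos (show ∃ Q, IsHanoiWith a Q from ha)]
    exact ha.choose_spec

lemma IsHanoiAut.inv (ha : IsHanoiAut a) : IsHanoiAut a⁻¹ :=
  let ⟨Q, h⟩ := ha; ⟨Q, h.inv⟩

lemma IsHanoiAut.inactivePegs_inv (ha : IsHanoiAut a) : inactivePegs a⁻¹ = inactivePegs a := by
  by_cases h1 : a = 1
  · rw [h1, inv_one]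
  · exact ha.inv.isHanoiWith_inactivePegs.unique ha.isHanoiWith_inactivePegs.inv
      (inv_ne_one.mpr h1)

lemma IsHanoiAut.isTreeAut (ha : IsHanoiAut a) : IsTreeAut a :=
  ha.isHanoiWith_inactivePegs.1

lemma IsHanoiAut.sec_of_notMem (ha : IsHanoiAut a) {j : Fin k} (hj : j ∉ inactivePegs a) :
    sec a j = 1 :=
  ha.isHanoiWith_inactivePegs.2.1 j hj

lemma IsHanoiAut.sec_of_mem (ha : IsHanoiAut a) {j : Fin k} (hj : j ∈ inactivePegs a) :
    sec a j = a :=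
  ha.isHanoiWith_inactivePegs.2.2.1 j hj

lemma IsHanoiAut.rootPerm_of_mem (ha : IsHanoiAut a) {j : Fin k} (hj : j ∈ inactivePegs a) :
    rootPerm a j = j :=
  ha.isHanoiWith_inactivePegs.2.2.2 j hj

variable {L L' : List (Equiv.Perm (Word k))} {S : Set (Equiv.Perm (Word k))}
  {g : Equiv.Perm (Word k)}

lemma isTreeAut_prod_and_mapsTo_rootPerm {O : Set (Fin k)}
    (h : ∀ s ∈ L, IsTreeAut s ∧ Set.MapsTo (rootPerm s) O O) :
    IsTreeAut L.prod ∧ Set.MapsTo (rootPerm L.prod) O O :=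
  List.prod_induction (fun g => IsTreeAut g ∧ Set.MapsTo (rootPerm g) O O)
    (fun _ _ ha hb => ⟨ha.1.mul hb.1, by rw [rootPerm_mul ha.1 hb.1]; exact ha.2.comp hb.2⟩)
    ⟨.one, by rw [rootPerm_one]; exact Set.mapsTo_id O⟩ h

lemma sec_prod_of_mem_essSet {p : Fin k} (hL : ∀ s ∈ L, IsHanoiAut s) (hp : p ∈ essSet L) :
    sec L.prod p = L.prod :=
  (List.prod_induction (fun g => IsTreeAut g ∧ rootPerm g p = p ∧ sec g p = g)
    (fun a b ⟨ha, hap, has⟩ ⟨hb, hbp, hbs⟩ =>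
      ⟨ha.mul hb, by rw [rootPerm_mul ha hb, Equiv.Perm.mul_apply, hbp, hap],
        by rw [sec_mul ha hb, hbp, has, hbs]⟩)
    ⟨.one, by rw [rootPerm_one]; rfl, sec_one p⟩
    fun s hs => ⟨(hL s hs).isTreeAut, (hL s hs).rootPerm_of_mem (Set.mem_iInter₂.mp hp s hs),
      (hL s hs).sec_of_mem (Set.mem_iInter₂.mp hp s hs)⟩).2.2

/-- The section of a product of Hanoi automorphisms at `j` is the product of the sections of
its letters at successive images of `j`; those are `1` or the letter itself, so only the letters
having an inactive peg in an invariant set containing `j` survive. -/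
lemma exists_sublist_prod_eq_sec {O : Set (Fin k)} (hL : ∀ s ∈ L, IsHanoiAut s)
    (hO : ∀ s ∈ L, Set.MapsTo (rootPerm s) O O) {j : Fin k} (hj : j ∈ O) :
    ∃ L' : List (Equiv.Perm (Word k)), L'.Sublist L ∧
      (∀ t ∈ L', (inactivePegs t ∩ O).Nonempty) ∧ L'.prod = sec L.prod j := by
  induction L with
  | nil => exact ⟨[], .slnil, by simp, by simp [sec_one]⟩
  | cons s L ih =>
    simp only [List.mem_cons, forall_eq_or_imp] at hL hO
    obtain ⟨L', hsub, hpegs, hprod⟩ := ih hL.2 hO.2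
    obtain ⟨htree, hmaps⟩ := isTreeAut_prod_and_mapsTo_rootPerm fun t ht =>
      ⟨(hL.2 t ht).isTreeAut, hO.2 t ht⟩
    rw [List.prod_cons, sec_mul hL.1.isTreeAut htree, ← hprod]
    by_cases hx : rootPerm L.prod j ∈ inactivePegs s
    · refine ⟨s :: L', hsub.cons_cons s, ?_, by rw [hL.1.sec_of_mem hx, List.prod_cons]⟩
      simpa only [List.mem_cons, forall_eq_or_imp] using ⟨⟨_, hx, hmaps hj⟩, hpegs⟩
    · exact ⟨L', hsub.cons s, hpegs, by rw [hL.1.sec_of_notMem hx, one_mul]⟩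

lemma essSet_anti (h : L' ⊆ L) : essSet L ⊆ essSet L' :=
  Set.biInter_subset_biInter_left h

namespace IsRepOf

lemma isHanoiAut (hS : ∀ a ∈ S, IsHanoiAut a) (hL : IsRepOf S L g) :
    ∀ s ∈ L, IsHanoiAut s :=
  fun s hs => (hL.1 s hs).elim (hS s) fun h => inv_inv s ▸ (hS _ h).inv

lemma of_subset (hL : IsRepOf S L g) (h : L' ⊆ L) : IsRepOf S L' L'.prod :=
  ⟨fun s hs => hL.1 s (h hs), rfl⟩

lemma mem_closure (hL : IsRepOf S L g) : g ∈ Subgroup.closure S :=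
  hL.2 ▸ Subgroup.list_prod_mem _ fun s hs =>
    (hL.1 s hs).elim (fun h => Subgroup.subset_closure h)
      fun h => inv_mem_iff.mp (Subgroup.subset_closure h)

lemma mem_preNucleus (hS : ∀ a ∈ S, IsHanoiAut a) (hL : IsRepOf S L g)
    (hQ : (essSet L).Nonempty) : g ∈ preNucleus (Subgroup.closure S) :=
  let ⟨p, hp⟩ := hQ
  ⟨hL.mem_closure, p, hL.2 ▸ sec_prod_of_mem_essSet (hL.isHanoiAut hS) hp⟩

open Classical in
lemma dCount_le (hL : IsRepOf S L g) (hQ : (essSet L).Nonempty) :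
    dCount S g ≤ L.toFinset.card :=
  Nat.sInf_le ⟨L, hL, hQ, rfl⟩

open Classical in
lemma sec_mem_preNucleus_and_dCount_lt (hS : ∀ a ∈ S, IsHanoiAut a) (hL : IsRepOf S L g)
    (hQ : (essSet L).Nonempty) {O : Set (Fin k)} (hO : ∀ s ∈ L, Set.MapsTo (rootPerm s) O O)
    {j : Fin k} (hj : j ∈ O) {s₀ : Equiv.Perm (Word k)} (hs₀ : s₀ ∈ L)
    (hs₀O : O ∩ inactivePegs s₀ = ∅) :
    sec g j ∈ preNucleus (Subgroup.closure S) ∧ dCount S (sec g j) < L.toFinset.card := by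
  obtain ⟨L', hsub, hpegs, hprod⟩ := exists_sublist_prod_eq_sec (hL.isHanoiAut hS) hO hj
  rw [hL.2] at hprod
  have hrep : IsRepOf S L' (sec g j) := hprod ▸ hL.of_subset hsub.subset
  have hQ' : (essSet L').Nonempty := hQ.mono (essSet_anti hsub.subset)
  have hs₀L' : s₀ ∉ L' := fun h => (hpegs s₀ h).ne_empty (Set.inter_comm _ _ ▸ hs₀O)
  refine ⟨hrep.mem_preNucleus hS hQ', (hrep.dCount_le hQ').trans_lt (Finset.card_lt_card ?_)⟩
  have hsubset : L'.toFinset ⊆ L.toFinset := fun t ht => by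
    simpa using hsub.subset (List.mem_toFinset.mp ht)
  exact (Finset.ssubset_iff_of_subset hsubset).mpr
    ⟨s₀, List.mem_toFinset.mpr hs₀, by rwa [List.mem_toFinset]⟩

end IsRepOf

open Classical in
/-- Condition (*) speaks about subsets of `S`, while the letters of a representation lie in
`S ∪ S⁻¹`; `toGen S` moves a letter into `S` without changing its inactive pegs. -/
noncomputable def toGen (S : Set (Equiv.Perm (Word k))) (s : Equiv.Perm (Word k)) :
    Equiv.Perm (Word k) :=
  if s ∈ S then s else s⁻¹

lemma toGen_mem {s : Equiv.Perm (Word k)} (hs : s ∈ S ∨ s⁻¹ ∈ S) : toGen S s ∈ S := by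
  unfold toGen
  split_ifs with h
  exacts [h, hs.resolve_left h]

lemma toGen_eq_or (S : Set (Equiv.Perm (Word k))) (s : Equiv.Perm (Word k)) :
    toGen S s = s ∨ toGen S s = s⁻¹ := by
  unfold toGen
  split_ifs <;> simp

lemma IsHanoiAut.inactivePegs_toGen (ha : IsHanoiAut a) :
    inactivePegs (toGen S a) = inactivePegs a := by
  rcases toGen_eq_or S a with h | h <;> rw [h]
  exact ha.inactivePegs_inv

lemma IsTreeAut.rootPerm_mem_closure (he : IsTreeAut e) {T : Set (Equiv.Perm (Word k))}
    (hT : toGen S e ∈ T) : rootPerm e ∈ Subgroup.closure (rootPerm '' T) := by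
  have hgen := Subgroup.subset_closure (Set.mem_image_of_mem rootPerm hT)
  rcases toGen_eq_or S e with h | h <;> rw [h] at hgen
  · exact hgen
  · rw [rootPerm_inv he] at hgen
    exact inv_mem_iff.mp hgen

open Classical in
lemma mapsTo_rootPerm_orbT_image_toGen (hL : ∀ s ∈ L, IsTreeAut s) (j : Fin k) :
    ∀ s ∈ L, Set.MapsTo (rootPerm s) (orbT (L.toFinset.image (toGen S)) j)
      (orbT (L.toFinset.image (toGen S)) j) := fun s hs _ hx =>
  MulAction.mem_orbit_of_mem_orbit
    ⟨rootPerm s, (hL s hs).rootPerm_mem_closure (by simpa using ⟨s, hs, rfl⟩)⟩ hx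

lemma orbT_eq_singleton {T : Finset (Equiv.Perm (Word k))} {j : Fin k} (hj : j ∈ fixT T) :
    orbT T j = {j} := by
  refine Set.eq_singleton_iff_unique_mem.mpr ⟨MulAction.mem_orbit_self j, ?_⟩
  rintro _ ⟨⟨σ, hσ⟩, rfl⟩
  have hle : Subgroup.closure ((fun a => rootPerm a) '' (T : Set (Equiv.Perm (Word k)))) ≤
      MulAction.stabilizer _ j :=
    (Subgroup.closure_le _).mpr (by rintro _ ⟨s, hs, rfl⟩; exact hj s hs)
  exact hle hσ

open Classical in
/-- Condition (*) applied to the generators occurring in `L`; it says nothing when `j` is fixed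
by all of them, but then the orbit of `j` is `{j}`. -/
lemma IsRepOf.exists_orbT_inter_inactivePegs_eq_empty (hS : ∀ a ∈ S, IsHanoiAut a)
    (hstar : CondStar S) (hL : IsRepOf S L g) (hQ : (essSet L).Nonempty) {j : Fin k}
    {s₀ : Equiv.Perm (Word k)} (hs₀ : s₀ ∈ L) (hj : j ∉ inactivePegs s₀) :
    ∃ s ∈ L, orbT (L.toFinset.image (toGen S)) j ∩ inactivePegs s = ∅ := by
  have hHan := hL.isHanoiAut hS
  by_cases hfix : j ∈ fixT (L.toFinset.image (toGen S))
  · exact ⟨s₀, hs₀, by simpa [orbT_eq_singleton hfix] using hj⟩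
  have hTS : ((L.toFinset.image (toGen S) : Finset _) : Set (Equiv.Perm (Word k))) ⊆ S := by
    intro t ht
    obtain ⟨s, hs, rfl⟩ := Finset.mem_image.mp ht
    exact toGen_mem (hL.1 s (List.mem_toFinset.mp hs))
  have hTQ : (⋂ t ∈ L.toFinset.image (toGen S), inactivePegs t).Nonempty := by
    obtain ⟨p, hp⟩ := hQ
    refine ⟨p, Set.mem_iInter₂.mpr fun t ht => ?_⟩
    obtain ⟨s, hs, rfl⟩ := Finset.mem_image.mp ht
    rw [List.mem_toFinset] at hs
    rw [(hHan s hs).inactivePegs_toGen]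
    exact Set.mem_iInter₂.mp hp s hs
  obtain ⟨t, ht, horb⟩ := hstar _ hTS hTQ j hfix
  obtain ⟨s, hs, rfl⟩ := Finset.mem_image.mp ht
  rw [List.mem_toFinset] at hs
  exact ⟨s, hs, (hHan s hs).inactivePegs_toGen ▸ horb⟩

end

open Classical in
theorem distinct_generators_lemma_general {k : ℕ} (S : Set (Equiv.Perm (Word k)))
    (hS : ∀ a ∈ S, IsHanoiAut a)
    (hstar : CondStar S) (g : Equiv.Perm (Word k))
    (L : List (Equiv.Perm (Word k))) (M : ℕ)
    (hL : IsRepOf S L g) (hQ : (essSet L).Nonempty) (hM : L.toFinset.card = M) :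
    ∀ j : Fin k, sec g j = g ∨
      (sec g j ∈ preNucleus (Subgroup.closure S) ∧ dCount S (sec g j) < M) := by
  intro j
  have hHan := hL.isHanoiAut hS
  by_cases hall : ∀ s ∈ L, j ∈ inactivePegs s
  · exact .inl (hL.2 ▸ sec_prod_of_mem_essSet hHan (Set.mem_iInter₂.mpr hall))
  push Not at hall
  obtain ⟨s₀, hs₀, hj⟩ := hall
  obtain ⟨s, hs, hO⟩ := hL.exists_orbT_inter_inactivePegs_eq_empty hS hstar hQ hs₀ hj
  exact .inr (hM ▸ hL.sec_mem_preNucleus_and_dCount_lt hS hQ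
    (mapsTo_rootPerm_orbT_image_toGen (fun s hs => (hHan s hs).isTreeAut) j)
    (MulAction.mem_orbit_self j) hs hO)

open Classical in
/-- Lemma: sections decrease the number of distinct generators.
Assume `S` satisfies condition (*) and `g` has a representation with nonempty
essential set using exactly `M` distinct generators.  Then for every letter
`j`, either `g|_j = g`, or `g|_j` lies in the prenucleus with `d(g|_j) < M`. -/
theorem distinct_generators_lemma {k : ℕ} (S : Set (Equiv.Perm (Word k)))
    (hS1 : (1 : Equiv.Perm (Word k)) ∈ S) (hS : ∀ a ∈ S, IsHanoiAut a)
    (hstar : CondStar S) (g : Equiv.Perm (Word k))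
    (L : List (Equiv.Perm (Word k))) (M : ℕ)
    (hL : IsRepOf S L g) (hQ : (essSet L).Nonempty) (hM : L.toFinset.card = M) :
    ∀ j : Fin k, sec g j = g ∨
      (sec g j ∈ preNucleus (Subgroup.closure S) ∧ dCount S (sec g j) < M) :=
  distinct_generators_lemma_general S hS hstar g L M hL hQ hM

end Hanoi
end

section
/- The critical set C := π^{−1}(⋃_{i≠j} (F_i(K^{(k)}) ∩ F_j(K^{(k)}))) equals the set of sequences …llli with i, l ∈ X_k, i ≠ l (i.e. x_1 = i and x_s = l for all s ≥ 2). Moreover, with σ : X_k^{−ω} → X_k^{−ω} the shift σ(…x_3x_2x_1) = …x_3x_2, the postcritical set P := ⋃_{n≥1} σ^n(C) equals the set of the k constant sequences {…lll : l ∈ X_k}; in particular P is finite, so the self-similar structure (K^{(k)}, X_k, {F_i}) is post-critically finite. -/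
/-!
In barycentric coordinates `t` for the simplex `p`, with `c = 1/(k-1)`, the map `F i` sends `t`
to `t'` with `t'_i = c + (1 - c) t_i` and `t'_m = c (1 - t_i - t_m)` for `m ≠ i`. The `F i` map
the simplex into itself, so `K` lies in it, and there the `i`-th coordinate is `≥ c` on `F_i(K)`
but `≤ c` on `F_j(K)`, `j ≠ i`. Hence `F_i(y) = F_j(z)` forces `t_i(y) = t_j(y) = 0`; writing
`y = F_a(w)` then forces `w = y = p_a`, so the meeting point is `F_i(p_a) = q_a`. Conversely
`q_l = F_i(p_l)` for each of the `k - 1 ≥ 2` indices `i ≠ l`.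
Similarly `F a y = p l` forces `a = l` and `y = p l`, while `F a y = q l` forces `a ≠ l` and
`y = p l`. As `π x = F_{x_1}(π(σ x))`, the only address of `p_l` is `…lll`, and the addresses
of `q_l` are the sequences `…llli` with `i ≠ l`.
-/

namespace HanoiGeo

/-- The `m`-th level cell `F_{x_1}(F_{x_2}( … F_{x_m}(K) … ))` determined by a
left-infinite sequence `… x_2 x_1` over `Fin k` (encoded as `x : ℕ → Fin k`
with `x s = x_{s+1}`); so `cells F K x m = (F_{x_m} ∘ ⋯ ∘ F_{x_1})`-image of
`K` in the sense of the paper, and these sets are nested in `m`. -/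
def cells {k d : ℕ} (F : Fin k → (EuclideanSpace ℝ (Fin d) →ᵃ[ℝ] EuclideanSpace ℝ (Fin d)))
    (K : Set (EuclideanSpace ℝ (Fin d))) : (ℕ → Fin k) → ℕ → Set (EuclideanSpace ℝ (Fin d))
  | _, 0 => K
  | x, m + 1 => F (x 0) '' cells F K (fun n => x (n + 1)) m

open Set Finset

theorem subset_of_subset_iUnion_image_of_mapsTo {X ι : Type*} [MetricSpace X] {f : ι → X → X}
    (hf : ∀ i, ∃ c, ContractingWith c (f i)) {K S : Set X} (hK : IsCompact K)
    (hKf : K ⊆ ⋃ i, f i '' K) (hS : IsCompact S) (hSne : S.Nonempty)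
    (hfS : ∀ i, MapsTo (f i) S S) : K ⊆ S := by
  rcases K.eq_empty_or_nonempty with rfl | hKne
  · exact empty_subset S
  obtain ⟨x₀, hx₀K, hmax⟩ :=
    hK.exists_isMaxOn hKne (Metric.continuous_infDist_pt S).continuousOn
  -- at a point of `K` farthest from `S`, the distance `D` to `S` satisfies `D ≤ c D`
  have hD : Metric.infDist x₀ S = 0 := by
    obtain ⟨i, y, hyK, rfl⟩ : ∃ i, ∃ y ∈ K, f i y = x₀ := by simpa using hKf hx₀K
    obtain ⟨c, hc⟩ := hf i
    obtain ⟨z, hzS, hyz⟩ := hS.exists_infDist_eq_dist hSne y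
    have hle : Metric.infDist (f i y) S ≤ c * Metric.infDist (f i y) S := calc
      Metric.infDist (f i y) S ≤ dist (f i y) (f i z) :=
          Metric.infDist_le_dist_of_mem (hfS i hzS)
      _ ≤ c * dist y z := hc.dist_le_mul y z
      _ = c * Metric.infDist y S := by rw [hyz]
      _ ≤ c * Metric.infDist (f i y) S := by gcongr; exact hmax hyK
    have hc1 : (c : ℝ) < 1 := hc.1
    nlinarith [Metric.infDist_nonneg (x := f i y) (s := S)]
  intro x hx
  rw [hS.isClosed.mem_iff_infDist_zero hSne]
  exact le_antisymm (hD ▸ hmax hx) Metric.infDist_nonneg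

section Barycentric

variable {ι E : Type*} [AddCommGroup E] [Module ℝ E] (b : AffineBasis ι ℝ E)

lemma coord_nonneg {x : E} (hx : x ∈ convexHull ℝ (range b)) (m : ι) : 0 ≤ b.coord m x := by
  rw [b.convexHull_eq_nonneg_coord] at hx
  exact hx m

lemma sum_coord_le_one [Fintype ι] {x : E} (hx : x ∈ convexHull ℝ (range b)) (s : Finset ι) :
    ∑ m ∈ s, b.coord m x ≤ 1 := by
  calc ∑ m ∈ s, b.coord m x ≤ ∑ m, b.coord m x :=
        sum_le_sum_of_subset_of_nonneg (subset_univ s) fun m _ _ => coord_nonneg b hx m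
    _ = 1 := b.sum_coord_apply_eq_one x

lemma eq_of_coord_eq_one [Fintype ι] {x : E} (hx : x ∈ convexHull ℝ (range b)) {a : ι}
    (ha : b.coord a x = 1) : x = b a := by
  classical
  refine b.ext_elem fun m => ?_
  rcases eq_or_ne m a with rfl | hma
  · rw [ha, b.coord_apply_eq]
  · have hpair := sum_coord_le_one b hx {a, m}
    rw [sum_pair hma.symm, ha] at hpair
    rw [b.coord_apply_ne hma]
    linarith [coord_nonneg b hx m]

end Barycentric

variable {E : Type*} [AddCommGroup E] [Module ℝ E] {k : ℕ}

lemma inv_natCast_sub_one_mem_Ioc (hk : 2 ≤ k) : ((k : ℝ) - 1)⁻¹ ∈ Set.Ioc 0 1 := by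
  have : (1 : ℝ) ≤ k - 1 := by
    rw [le_sub_iff_add_le]; exact_mod_cast hk
  exact ⟨inv_pos.mpr (by linarith), inv_le_one_of_one_le₀ this⟩

lemma inv_natCast_sub_one_lt_one (hk : 3 ≤ k) : ((k : ℝ) - 1)⁻¹ < 1 := by
  have : (1 : ℝ) < k - 1 := by
    rw [lt_sub_iff_add_lt]; exact_mod_cast hk
  exact inv_lt_one_of_one_lt₀ this

def IsCentroidSystem (b : AffineBasis (Fin k) ℝ E) (F : Fin k → E →ᵃ[ℝ] E) : Prop :=
  ∀ i, F i (b i) = b i ∧ ∀ j, j ≠ i → F i (b j) = (univ.erase j).centroid ℝ b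

lemma coord_centroid_erase (hk : 2 ≤ k) (b : AffineBasis (Fin k) ℝ E) (m j : Fin k) :
    b.coord m ((univ.erase j).centroid ℝ b) = if m = j then 0 else ((k : ℝ) - 1)⁻¹ := by
  split_ifs with hmj
  · subst hmj
    have hne : (univ.erase m).Nonempty := by
      rw [← card_pos, card_erase_of_mem (mem_univ m), card_univ, Fintype.card_fin]; omega
    exact b.coord_apply_combination_of_notMem (notMem_erase m univ)
      ((univ.erase m).sum_centroidWeights_eq_one_of_nonempty ℝ hne)
  · rw [b.coord_apply_centroid (mem_erase.mpr ⟨hmj, mem_univ m⟩),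
      card_erase_of_mem (mem_univ j), card_univ, Fintype.card_fin, Nat.cast_sub j.pos]
    norm_num

section CentroidSystem

variable {b : AffineBasis (Fin k) ℝ E} {F : Fin k → E →ᵃ[ℝ] E}

lemma coord_apply_self (hk : 2 ≤ k) (hF : IsCentroidSystem b F) (i : Fin k) (x : E) :
    b.coord i (F i x) = ((k : ℝ) - 1)⁻¹ + (1 - ((k : ℝ) - 1)⁻¹) * b.coord i x := by
  have h : (b.coord i).comp (F i) =
      AffineMap.const ℝ E ((k : ℝ) - 1)⁻¹ + (1 - ((k : ℝ) - 1)⁻¹) • b.coord i := by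
    refine AffineMap.ext_on b.tot ?_
    rintro _ ⟨j, rfl⟩
    rcases eq_or_ne j i with rfl | hji
    · simp [(hF j).1]
    · simp [(hF i).2 j hji, coord_centroid_erase hk, hji.symm, b.coord_apply_ne hji.symm]
  simpa using congrArg (· x) h

lemma coord_apply_of_ne (hk : 2 ≤ k) (hF : IsCentroidSystem b F) {i m : Fin k} (hmi : m ≠ i)
    (x : E) :
    b.coord m (F i x) = ((k : ℝ) - 1)⁻¹ * (1 - b.coord i x - b.coord m x) := by
  have h : (b.coord m).comp (F i) =
      ((k : ℝ) - 1)⁻¹ • (AffineMap.const ℝ E (1 : ℝ) - b.coord i - b.coord m) := by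
    refine AffineMap.ext_on b.tot ?_
    rintro _ ⟨j, rfl⟩
    rcases eq_or_ne j i with rfl | hji
    · simp [(hF j).1, b.coord_apply_ne hmi]
    · rcases eq_or_ne m j with rfl | hmj
      · simp [(hF i).2 m hji, coord_centroid_erase hk, b.coord_apply_ne hji.symm]
      · simp [(hF i).2 j hji, coord_centroid_erase hk, hmj, b.coord_apply_ne hji.symm,
          b.coord_apply_ne hmj]
  simpa using congrArg (· x) h

lemma mapsTo_convexHull (hk : 2 ≤ k) (hF : IsCentroidSystem b F) (i : Fin k) :
    MapsTo (F i) (convexHull ℝ (range b)) (convexHull ℝ (range b)) := by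
  intro x hx
  obtain ⟨hc, hc1⟩ := inv_natCast_sub_one_mem_Ioc hk
  have hpair : ∀ m, m ≠ i → b.coord i x + b.coord m x ≤ 1 := fun m hmi => by
    simpa [sum_pair hmi.symm] using sum_coord_le_one b hx {i, m}
  rw [b.convexHull_eq_nonneg_coord] at hx ⊢
  intro m
  rcases eq_or_ne m i with rfl | hmi
  · rw [coord_apply_self hk hF]
    nlinarith [hx m]
  · rw [coord_apply_of_ne hk hF hmi]
    nlinarith [hpair m hmi]

lemma apply_eq_vertex (hk : 3 ≤ k) (hF : IsCentroidSystem b F) {a l : Fin k} {x : E}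
    (hx : x ∈ convexHull ℝ (range b)) (h : F a x = b l) : a = l ∧ x = b l := by
  obtain ⟨hc, -⟩ := inv_natCast_sub_one_mem_Ioc (by omega : 2 ≤ k)
  have hc1 := inv_natCast_sub_one_lt_one hk
  have hcoord : b.coord l (F a x) = 1 := by rw [h, b.coord_apply_eq]
  obtain rfl : a = l := by
    by_contra hal
    rw [coord_apply_of_ne (by omega) hF (Ne.symm hal)] at hcoord
    nlinarith [coord_nonneg b hx a, coord_nonneg b hx l]
  rw [coord_apply_self (by omega) hF] at hcoord
  have hxa : b.coord a x = 1 := by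
    have : (1 - ((k : ℝ) - 1)⁻¹) * (b.coord a x - 1) = 0 := by linarith
    linarith [(mul_eq_zero.mp this).resolve_left (by linarith)]
  exact ⟨rfl, eq_of_coord_eq_one b hx hxa⟩

lemma apply_eq_centroid (hk : 3 ≤ k) (hF : IsCentroidSystem b F) {a l : Fin k} {x : E}
    (hx : x ∈ convexHull ℝ (range b)) (h : F a x = (univ.erase l).centroid ℝ b) :
    a ≠ l ∧ x = b l := by
  obtain ⟨hc, -⟩ := inv_natCast_sub_one_mem_Ioc (by omega : 2 ≤ k)
  have hc1 := inv_natCast_sub_one_lt_one hk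
  have hcoord (m : Fin k) := congrArg (b.coord m) h
  simp only [coord_centroid_erase (by omega : 2 ≤ k)] at hcoord
  have hal : a ≠ l := by
    rintro rfl
    have := hcoord a
    rw [coord_apply_self (by omega) hF, if_pos rfl] at this
    nlinarith [coord_nonneg b hx a]
  have hxa : b.coord a x = 0 := by
    have := hcoord a
    rw [coord_apply_self (by omega) hF, if_neg hal] at this
    have : (1 - ((k : ℝ) - 1)⁻¹) * b.coord a x = 0 := by linarith
    exact (mul_eq_zero.mp this).resolve_left (by linarith)
  have hxl : b.coord l x = 1 := by
    have := hcoord l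
    rw [coord_apply_of_ne (by omega) hF (Ne.symm hal), if_pos rfl, hxa] at this
    linarith [(mul_eq_zero.mp this).resolve_left hc.ne']
  exact ⟨hal, eq_of_coord_eq_one b hx hxl⟩

lemma coord_eq_zero_of_apply_eq_apply (hk : 3 ≤ k) (hF : IsCentroidSystem b F) {i j : Fin k}
    (hij : i ≠ j) {y z : E} (hy : y ∈ convexHull ℝ (range b)) (hz : z ∈ convexHull ℝ (range b))
    (h : F i y = F j z) : b.coord i y = 0 ∧ b.coord j y = 0 := by
  obtain ⟨hc, -⟩ := inv_natCast_sub_one_mem_Ioc (by omega : 2 ≤ k)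
  have hc1 := inv_natCast_sub_one_lt_one hk
  have hi := congrArg (b.coord i) h
  have hj := congrArg (b.coord j) h
  rw [coord_apply_self (by omega) hF, coord_apply_of_ne (by omega) hF hij] at hi
  rw [coord_apply_self (by omega) hF, coord_apply_of_ne (by omega) hF hij.symm] at hj
  have hyi0 := coord_nonneg b hy i
  have hzj0 := coord_nonneg b hz j
  have hzi0 := coord_nonneg b hz i
  have hyi : (1 - ((k : ℝ) - 1)⁻¹) * b.coord i y = 0 := by
    nlinarith [mul_nonneg hc.le hzj0, mul_nonneg hc.le hzi0,
      mul_nonneg (sub_nonneg.mpr hc1.le) hyi0]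
  have hzj : ((k : ℝ) - 1)⁻¹ * b.coord j z = 0 := by
    nlinarith [mul_nonneg hc.le hzj0, mul_nonneg hc.le hzi0,
      mul_nonneg (sub_nonneg.mpr hc1.le) hyi0]
  replace hyi := (mul_eq_zero.mp hyi).resolve_left (by linarith)
  replace hzj := (mul_eq_zero.mp hzj).resolve_left hc.ne'
  rw [hyi, hzj] at hj
  have : ((k : ℝ) - 1)⁻¹ * b.coord j y = 0 := by linarith
  exact ⟨hyi, (mul_eq_zero.mp this).resolve_left hc.ne'⟩

lemma eq_vertex_of_coord_apply_eq_zero (hk : 2 ≤ k) (hF : IsCentroidSystem b F)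
    {a i j : Fin k} (hij : i ≠ j) {w : E} (hw : w ∈ convexHull ℝ (range b))
    (hi : b.coord i (F a w) = 0) (hj : b.coord j (F a w) = 0) : w = b a := by
  obtain ⟨hc, hc1⟩ := inv_natCast_sub_one_mem_Ioc hk
  have hne (m : Fin k) (hm : b.coord m (F a w) = 0) : m ≠ a := by
    rintro rfl
    rw [coord_apply_self hk hF] at hm
    nlinarith [coord_nonneg b hw m]
  have hai := hne i hi
  have haj := hne j hj
  rw [coord_apply_of_ne hk hF hai] at hi
  rw [coord_apply_of_ne hk hF haj] at hj
  replace hi := (mul_eq_zero.mp hi).resolve_left hc.ne'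
  replace hj := (mul_eq_zero.mp hj).resolve_left hc.ne'
  have htriple := sum_coord_le_one b hw {a, i, j}
  rw [sum_insert (by simp [hai.symm, haj.symm]), sum_pair hij] at htriple
  exact eq_of_coord_eq_one b hw (by linarith [coord_nonneg b hw j])

lemma exists_pair_ne_of_three_le (hk : 3 ≤ k) (l : Fin k) :
    ∃ i j : Fin k, i ≠ l ∧ j ≠ l ∧ i ≠ j := by
  have : 1 < (univ.erase l).card := by
    rw [card_erase_of_mem (mem_univ l), card_univ, Fintype.card_fin]; omega
  obtain ⟨i, j, hi, hj, hij⟩ := one_lt_card_iff.mp this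
  exact ⟨i, j, ne_of_mem_erase hi, ne_of_mem_erase hj, hij⟩

theorem iUnion_inter_image_eq_range_centroid (hk : 3 ≤ k) (hF : IsCentroidSystem b F)
    {K : Set E} (hKΔ : K ⊆ convexHull ℝ (range b)) (hKF : K ⊆ ⋃ i, F i '' K)
    (hvert : ∀ l, b l ∈ K) :
    ⋃ i, ⋃ j, ⋃ (_ : i ≠ j), (F i '' K ∩ F j '' K) =
      range fun l => (univ.erase l).centroid ℝ b := by
  apply Set.Subset.antisymm
  · simp only [iUnion_subset_iff]
    rintro i j hij _ ⟨⟨y, hyK, rfl⟩, ⟨z, hzK, hyz⟩⟩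
    obtain ⟨hyi, hyj⟩ :=
      coord_eq_zero_of_apply_eq_apply hk hF hij (hKΔ hyK) (hKΔ hzK) hyz.symm
    obtain ⟨a, w, hwK, rfl⟩ : ∃ a, ∃ w ∈ K, F a w = y := by
      simpa only [mem_iUnion, mem_image] using hKF hyK
    have hwa := eq_vertex_of_coord_apply_eq_zero (by omega) hF hij (hKΔ hwK) hyi hyj
    rw [hwa, (hF a).1] at hyi ⊢
    have hai : a ≠ i := by rintro rfl; simp at hyi
    exact ⟨a, ((hF i).2 a hai).symm⟩
  · rintro _ ⟨l, rfl⟩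
    obtain ⟨i, j, hil, hjl, hij⟩ := exists_pair_ne_of_three_le hk l
    simp only [mem_iUnion]
    exact ⟨i, j, hij, ⟨b l, hvert l, (hF i).2 l hil.symm⟩,
      ⟨b l, hvert l, (hF j).2 l hjl.symm⟩⟩

end CentroidSystem

section Coding

variable {k d : ℕ} {F : Fin k → EuclideanSpace ℝ (Fin d) →ᵃ[ℝ] EuclideanSpace ℝ (Fin d)}
  {K : Set (EuclideanSpace ℝ (Fin d))} {proj : (ℕ → Fin k) → EuclideanSpace ℝ (Fin d)}

lemma proj_mem_cells (hproj : ∀ x, ⋂ m, cells F K x m = {proj x}) (x : ℕ → Fin k) (m : ℕ) :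
    proj x ∈ cells F K x m :=
  mem_iInter.mp ((hproj x).symm ▸ mem_singleton (proj x)) m

lemma proj_eq_apply_proj_tail (hproj : ∀ x, ⋂ m, cells F K x m = {proj x})
    (hFK : ∀ i, F i '' K ⊆ K) (x : ℕ → Fin k) :
    proj x = F (x 0) (proj fun n => x (n + 1)) := by
  have hmem : F (x 0) (proj fun n => x (n + 1)) ∈ ⋂ m, cells F K x m := by
    refine mem_iInter.mpr fun m => ?_
    cases m with
    | zero => exact hFK (x 0) (mem_image_of_mem _ (proj_mem_cells hproj _ 0))
    | succ m => exact mem_image_of_mem _ (proj_mem_cells hproj _ m)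
  rw [hproj x] at hmem
  exact hmem.symm

variable {b : AffineBasis (Fin k) ℝ (EuclideanSpace ℝ (Fin d))}

lemma proj_const (hF : IsCentroidSystem b F) (hcontr : ∀ i, ∃ c, ContractingWith c (F i))
    (hproj : ∀ x, ⋂ m, cells F K x m = {proj x}) (hFK : ∀ i, F i '' K ⊆ K) (l : Fin k) :
    proj (fun _ => l) = b l := by
  obtain ⟨c, hc⟩ := hcontr l
  exact hc.fixedPoint_unique' (proj_eq_apply_proj_tail hproj hFK fun _ => l).symm (hF l).1

section

variable (hk : 3 ≤ k) (hF : IsCentroidSystem b F) (hcontr : ∀ i, ∃ c, ContractingWith c (F i))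
  (hproj : ∀ x, ⋂ m, cells F K x m = {proj x}) (hFK : ∀ i, F i '' K ⊆ K)
  (hKΔ : K ⊆ convexHull ℝ (range b))
include hk hF hcontr hproj hFK hKΔ

lemma proj_eq_vertex_iff {x : ℕ → Fin k} {l : Fin k} : proj x = b l ↔ ∀ s, x s = l := by
  constructor
  · intro h s
    induction s generalizing x with
    | zero =>
      rw [proj_eq_apply_proj_tail hproj hFK] at h
      exact (apply_eq_vertex hk hF (hKΔ (proj_mem_cells hproj _ 0)) h).1
    | succ s ih =>
      rw [proj_eq_apply_proj_tail hproj hFK] at h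
      exact ih (apply_eq_vertex hk hF (hKΔ (proj_mem_cells hproj _ 0)) h).2
  · intro h
    obtain rfl : x = fun _ => l := funext h
    exact proj_const hF hcontr hproj hFK l

lemma proj_eq_centroid_iff {x : ℕ → Fin k} {l : Fin k} :
    proj x = (univ.erase l).centroid ℝ b ↔ x 0 ≠ l ∧ ∀ s, x (s + 1) = l := by
  rw [proj_eq_apply_proj_tail hproj hFK]
  constructor
  · intro h
    obtain ⟨h0, htail⟩ := apply_eq_centroid hk hF (hKΔ (proj_mem_cells hproj _ 0)) h
    exact ⟨h0, (proj_eq_vertex_iff hk hF hcontr hproj hFK hKΔ).mp htail⟩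
  · rintro ⟨h0, htail⟩
    rw [(proj_eq_vertex_iff hk hF hcontr hproj hFK hKΔ).mpr htail, (hF _).2 l h0.symm]

lemma preimage_range_centroid :
    proj ⁻¹' (range fun l => (univ.erase l).centroid ℝ b) =
      {x | ∃ i l : Fin k, i ≠ l ∧ x 0 = i ∧ ∀ s, 1 ≤ s → x s = l} := by
  ext x
  simp only [Set.mem_preimage, Set.mem_range, mem_ofPred_eq]
  constructor
  · rintro ⟨l, hl⟩
    obtain ⟨h0, htail⟩ := (proj_eq_centroid_iff hk hF hcontr hproj hFK hKΔ).mp hl.symm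
    refine ⟨x 0, l, h0, rfl, fun s hs => ?_⟩
    simpa only [Nat.sub_add_cancel hs] using htail (s - 1)
  · rintro ⟨i, l, hil, rfl, htail⟩
    exact ⟨l, ((proj_eq_centroid_iff hk hF hcontr hproj hFK hKΔ).mpr
      ⟨hil, fun s => htail (s + 1) (Nat.le_add_left 1 s)⟩).symm⟩

end

end Coding

lemma iUnion_shift_image_eq_const {α : Type*} [Nontrivial α] :
    (⋃ n : ℕ, ⋃ (_ : 1 ≤ n), (fun (x : ℕ → α) (s : ℕ) => x (s + n)) ''
        {x | ∃ i l : α, i ≠ l ∧ x 0 = i ∧ ∀ s, 1 ≤ s → x s = l}) =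
      {x | ∃ l : α, ∀ s, x s = l} := by
  ext y
  simp only [mem_iUnion, mem_image, mem_ofPred_eq]
  constructor
  · rintro ⟨n, hn, x, ⟨i, l, -, -, hl⟩, rfl⟩
    exact ⟨l, fun s => hl (s + n) (by omega)⟩
  · rintro ⟨l, hy⟩
    obtain ⟨i, hil⟩ := exists_ne l
    refine ⟨1, le_rfl, fun s => if s = 0 then i else l, ⟨i, l, hil, rfl, fun s hs => ?_⟩, ?_⟩
    · simp only [Nat.one_le_iff_ne_zero.mp hs, if_false]
    · funext s
      simp [hy s]

theorem post_critically_finite_general {k : ℕ} (hk : 3 ≤ k)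
    (p : Fin k → EuclideanSpace ℝ (Fin (k - 1)))
    (hind : AffineIndependent ℝ p)
    (q : Fin k → EuclideanSpace ℝ (Fin (k - 1)))
    (hq : ∀ i, q i = Finset.centroid ℝ (Finset.univ.erase i) p)
    (F : Fin k → (EuclideanSpace ℝ (Fin (k - 1)) →ᵃ[ℝ] EuclideanSpace ℝ (Fin (k - 1))))
    (hF : ∀ i, F i (p i) = p i ∧ ∀ j, j ≠ i → F i (p j) = q j)
    (hcontr : ∀ i, ∃ c : NNReal, c < 1 ∧ LipschitzWith c (F i))
    (K : Set (EuclideanSpace ℝ (Fin (k - 1))))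
    (hKc : IsCompact K) (hKinv : K = ⋃ i, F i '' K)
    (proj : (ℕ → Fin k) → EuclideanSpace ℝ (Fin (k - 1)))
    (hproj : ∀ x : ℕ → Fin k, (⋂ m : ℕ, cells F K x m) = {proj x}) :
    proj ⁻¹' (⋃ i, ⋃ j, ⋃ (_ : i ≠ j), ((F i '' K) ∩ (F j '' K))) =
      {x : ℕ → Fin k | ∃ i l : Fin k, i ≠ l ∧ x 0 = i ∧ ∀ s, 1 ≤ s → x s = l} ∧
    (⋃ n : ℕ, ⋃ (_ : 1 ≤ n),
        (fun (x : ℕ → Fin k) (s : ℕ) => x (s + n)) ''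
          (proj ⁻¹' (⋃ i, ⋃ j, ⋃ (_ : i ≠ j), ((F i '' K) ∩ (F j '' K))))) =
      {x : ℕ → Fin k | ∃ l : Fin k, ∀ s, x s = l} ∧
    Set.Finite {x : ℕ → Fin k | ∃ l : Fin k, ∀ s, x s = l} := by
  let b : AffineBasis (Fin k) ℝ (EuclideanSpace ℝ (Fin (k - 1))) :=
    ⟨p, hind, hind.affineSpan_eq_top_iff_card_eq_finrank_add_one.mpr (by simp; omega)⟩
  have hb : IsCentroidSystem b F := fun i =>
    ⟨(hF i).1, fun j hj => ((hF i).2 j hj).trans (hq j)⟩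
  have hFK (i : Fin k) : F i '' K ⊆ K :=
    (subset_iUnion (fun i => F i '' K) i).trans hKinv.superset
  have hKΔ : K ⊆ convexHull ℝ (range b) :=
    subset_of_subset_iUnion_image_of_mapsTo hcontr hKc hKinv.subset
      ((finite_range b).isCompact_convexHull (𝕜 := ℝ))
      ⟨b ⟨0, by omega⟩, subset_convexHull ℝ _ ⟨_, rfl⟩⟩ (mapsTo_convexHull (by omega) hb)
  have hvert (l : Fin k) : b l ∈ K :=
    proj_const hb hcontr hproj hFK l ▸ proj_mem_cells hproj _ 0
  have hcritical := iUnion_inter_image_eq_range_centroid hk hb hKΔ hKinv.subset hvert ▸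
    preimage_range_centroid hk hb hcontr hproj hFK hKΔ
  have : Nontrivial (Fin k) := Fin.nontrivial_iff_two_le.mpr (by omega)
  refine ⟨hcritical, hcritical ▸ iUnion_shift_image_eq_const, ?_⟩
  exact (finite_range fun l : Fin k => fun _ : ℕ => l).subset
    fun x ⟨l, hl⟩ => ⟨l, funext fun s => (hl s).symm⟩

/-- the self-similar structure `(K^{(k)}, X_k, {F_i})` is
post-critically finite.
The critical set `C = π⁻¹(⋃_{i≠j} F_i(K) ∩ F_j(K))` consists exactly of the
sequences `… l l l i` with `i ≠ l`; the postcritical set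
`P = ⋃_{n ≥ 1} σ^n(C)` (σ the shift) consists exactly of the `k` constant
sequences; in particular `P` is finite. -/
theorem post_critically_finite {k : ℕ} (hk : 3 ≤ k)
    (p : Fin k → EuclideanSpace ℝ (Fin (k - 1)))
    (hind : AffineIndependent ℝ p)
    (d : ℝ) (hd : 0 < d) (hdist : ∀ i j, i ≠ j → dist (p i) (p j) = d)
    (q : Fin k → EuclideanSpace ℝ (Fin (k - 1)))
    (hq : ∀ i, q i = Finset.centroid ℝ (Finset.univ.erase i) p)
    (F : Fin k → (EuclideanSpace ℝ (Fin (k - 1)) →ᵃ[ℝ] EuclideanSpace ℝ (Fin (k - 1))))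
    (hF : ∀ i, F i (p i) = p i ∧ ∀ j, j ≠ i → F i (p j) = q j)
    (hcontr : ∀ i, ∃ c : NNReal, c < 1 ∧ LipschitzWith c (F i))
    (K : Set (EuclideanSpace ℝ (Fin (k - 1))))
    (hKne : K.Nonempty) (hKc : IsCompact K) (hKinv : K = ⋃ i, F i '' K)
    (proj : (ℕ → Fin k) → EuclideanSpace ℝ (Fin (k - 1)))
    (hproj : ∀ x : ℕ → Fin k, (⋂ m : ℕ, cells F K x m) = {proj x}) :
    proj ⁻¹' (⋃ i, ⋃ j, ⋃ (_ : i ≠ j), ((F i '' K) ∩ (F j '' K))) =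
      {x : ℕ → Fin k | ∃ i l : Fin k, i ≠ l ∧ x 0 = i ∧ ∀ s, 1 ≤ s → x s = l} ∧
    (⋃ n : ℕ, ⋃ (_ : 1 ≤ n),
        (fun (x : ℕ → Fin k) (s : ℕ) => x (s + n)) ''
          (proj ⁻¹' (⋃ i, ⋃ j, ⋃ (_ : i ≠ j), ((F i '' K) ∩ (F j '' K))))) =
      {x : ℕ → Fin k | ∃ l : Fin k, ∀ s, x s = l} ∧
    Set.Finite {x : ℕ → Fin k | ∃ l : Fin k, ∀ s, x s = l} :=
  post_critically_finite_general hk p hind q hq F hF hcontr K hKc hKinv proj hproj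

end HanoiGeo
end
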